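/- arXiv:1106.5305 — 3 statements merged into one kernel-verified Lean document; each statement's English description precedes it below -/
import Mathlib

section
/- The functor H_0∘F^S is not essentially surjective: there exists an n-module M such that M is not isomorphic to H_0∘F^S(X,γ) for any topological space X and continuous function γ: X → ℝⁿ. -/
open CategoryTheory

noncomputable section

/-- The poset `ℝⁿ` with the product order (and the sup metric). -/
def Rn (n : ℕ) : Type := Fin n → ℝ

instance (n : ℕ) : PartialOrder (Rn n) := inferInstanceAs (PartialOrder (Fin n → ℝ))
instance (n : ℕ) : MetricSpace (Rn n) := inferInstanceAs (MetricSpace (Fin n → ℝ))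

/-- An `n`-module over the field `k`: a functor from the poset `(ℝⁿ, ≤)`
to the category of `k`-vector spaces. -/
abbrev NMod (k : Type) [Field k] (n : ℕ) := Rn n ⥤ ModuleCat.{0} k

/-- The vector `ε⃗ = ε•(1,…,1)` added to `a`. -/
def vshift {n : ℕ} (ε : ℝ) (a : Rn n) : Rn n := fun j => a j + ε

lemma Rn.le_def {n : ℕ} (a b : Rn n) : a ≤ b ↔ ∀ j, a j ≤ b j := Iff.rfl

lemma le_vshift {n : ℕ} {ε : ℝ} (hε : 0 ≤ ε) (a : Rn n) : a ≤ vshift ε a :=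
  (Rn.le_def _ _).2 fun j => by simp [vshift]; linarith

lemma le_vshift₂ {n : ℕ} {ε : ℝ} (hε : 0 ≤ ε) (a : Rn n) : a ≤ vshift ε (vshift ε a) :=
  le_trans (le_vshift hε a) (le_vshift hε _)

lemma vshift_mono {n : ℕ} (ε : ℝ) {a b : Rn n} (h : a ≤ b) : vshift ε a ≤ vshift ε b :=
  (Rn.le_def _ _).2 fun j => by simpa [vshift] using (Rn.le_def _ _).1 h j

/-- `M` and `N` are `ε`-interleaved. -/
def Interleaved {k : Type} [Field k] {n : ℕ} (ε : ℝ) (M N : NMod k n) : Prop :=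
  ∃ hε : 0 ≤ ε,
  ∃ f : ∀ a : Rn n, M.obj a ⟶ N.obj (vshift ε a),
  ∃ g : ∀ a : Rn n, N.obj a ⟶ M.obj (vshift ε a),
    (∀ (a b : Rn n) (h : a ≤ b),
        M.map (homOfLE h) ≫ f b = f a ≫ N.map (homOfLE (vshift_mono ε h))) ∧
    (∀ (a b : Rn n) (h : a ≤ b),
        N.map (homOfLE h) ≫ g b = g a ≫ M.map (homOfLE (vshift_mono ε h))) ∧
    (∀ a : Rn n, f a ≫ g (vshift ε a) = M.map (homOfLE (le_vshift₂ hε a))) ∧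
    (∀ a : Rn n, g a ≫ f (vshift ε a) = N.map (homOfLE (le_vshift₂ hε a)))

/-- The interleaving distance. -/
def dI {k : Type} [Field k] {n : ℕ} (M N : NMod k n) : ENNReal :=
  ⨅ (ε : ℝ) (_ : Interleaved ε M N), ENNReal.ofReal ε

/-- Singular chain complex functor with coefficients in `k`. -/
def singularChains (k : Type) [Field k] : TopCat.{0} ⥤ ChainComplex (ModuleCat.{0} k) ℕ :=
  TopCat.toSSet ⋙ ((SimplicialObject.whiskering _ _).obj (ModuleCat.free k)) ⋙
    AlgebraicTopology.alternatingFaceMapComplex _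

/-- Singular homology functor `H_i` with coefficients in `k`. -/
def singularHomology (k : Type) [Field k] (i : ℕ) : TopCat.{0} ⥤ ModuleCat.{0} k :=
  singularChains k ⋙ HomologicalComplex.homologyFunctor _ _ i

/-- The sublevel set filtration `F^S(X, γ)`. -/
def sublevelFiltration {n : ℕ} (X : TopCat.{0}) (γ : C(X, Rn n)) : Rn n ⥤ TopCat.{0} where
  obj a := TopCat.of {x : X // γ x ≤ a}
  map {a b} h := TopCat.ofHom ⟨fun x => ⟨x.1, le_trans x.2 (leOfHom h)⟩, by
    exact Continuous.subtype_mk (continuous_subtype_val) _⟩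
  map_id := by intros; rfl
  map_comp := by intros; rfl

/-- The persistent homology `n`-module `H_i ∘ F^S(X, γ)`. -/
def persistentHomology (k : Type) [Field k] {n : ℕ} (i : ℕ) (X : TopCat.{0})
    (γ : C(X, Rn n)) : NMod k n :=
  sublevelFiltration X γ ⋙ singularHomology k i

/-- A pseudometric on isomorphism classes of `n`-modules. -/
structure IsPseudometricOnIso {k : Type} [Field k] {n : ℕ}
    (d : NMod k n → NMod k n → ENNReal) : Prop where
  refl : ∀ M, d M M = 0
  symm : ∀ M N, d M N = d N M
  triangle : ∀ L M N, d L N ≤ d L M + d M N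
  congr_left : ∀ M M' N, Nonempty (M ≅ M') → d M N = d M' N

/-- An object of the category `C^S`: a topological space with an `ℝⁿ`-valued
continuous function. -/
structure CSObj (n : ℕ) where
  X : TopCat.{0}
  γ : C(X, Rn n)

open scoped Classical in
/-- The metric `d^S` on objects of `C^S`. -/
def dS {n : ℕ} (T₁ T₂ : CSObj n) : ENNReal :=
  if h : T₁.X = T₂.X then
    ⨆ x : T₁.X, edist (T₁.γ x) (T₂.γ (cast (congrArg (fun Z : TopCat.{0} => (Z : Type)) h) x))
  else ⊤

/-- `d` is `i`-stable. -/
def IStable (k : Type) [Field k] (n : ℕ) (i : ℕ) (d : NMod k n → NMod k n → ENNReal) : Prop :=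
  ∀ T₁ T₂ : CSObj n,
    d (persistentHomology k i T₁.X T₁.γ) (persistentHomology k i T₂.X T₂.γ) ≤ dS T₁ T₂

/-!
The module `M` with `M a = k` for every `a` and all transition maps `M a → M b`, `a < b`, equal
to zero cannot be a sublevel persistence module in degree 0. Indeed `H₀ Y = 0` only for empty `Y`,
so every sublevel set `X_a` would be nonempty; but for nonempty `Y` no map `Y → Z` induces zero on
`H₀`, since a point `pt → Y → Z → pt` factors the identity of `pt` and `H₀ pt ≠ 0`.
-/

open Limits

section ZeroTransitions

variable (α : Type*) [PartialOrder α] {C : Type*} [Category C] [HasZeroMorphisms C] (V : C)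

open scoped Classical in
def constWithZeroTransitions : α ⥤ C where
  obj _ := V
  map {a b} _ := if a = b then 𝟙 V else 0
  map_id _ := if_pos rfl
  map_comp {a b c} f g := by
    by_cases hab : a = b
    · subst hab
      simp
    · have hac : a ≠ c := fun hac =>
        hab (le_antisymm (leOfHom f) (hac ▸ leOfHom g))
      simp [hab, hac]

variable {α}

lemma constWithZeroTransitions_map_of_ne {a b : α} (f : a ⟶ b) (hab : a ≠ b) :
    (constWithZeroTransitions α V).map f = 0 :=
  if_neg hab

end ZeroTransitions

lemma isZero_sigma_const_iff {C : Type*} [Category C] [HasZeroMorphisms C] {R : C}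
    (hR : ¬IsZero R) (ι : Type*) [HasCoproduct fun _ : ι => R] :
    IsZero (∐ fun _ : ι => R) ↔ IsEmpty ι := by
  refine ⟨fun h => ⟨fun i => hR ?_⟩, fun _ => ?_⟩
  · rw [IsZero.iff_id_eq_zero]
    calc 𝟙 R = Sigma.ι _ i ≫ Sigma.desc fun _ => 𝟙 R := by simp
      _ = 0 := by rw [h.eq_of_tgt (Sigma.ι _ i) 0, zero_comp]
  · exact (IsZero.iff_id_eq_zero _).2 (Sigma.hom_ext _ _ isEmptyElim)

namespace ModuleCat

variable (R : Type*) [Ring R]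

lemma not_isZero_of_nontrivial (M : ModuleCat R) [Nontrivial M] : ¬IsZero M :=
  fun h => not_subsingleton M (isZero_iff_subsingleton.1 h)

def coyonedaObjIsoForget : coyoneda.obj (Opposite.op (ModuleCat.of R R)) ≅ forget (ModuleCat R) :=
  NatIso.ofComponents fun M =>
    Equiv.toIso
      { toFun f := f.hom 1
        invFun m := ModuleCat.ofHom (LinearMap.toSpanSingleton R M m)
        left_inv f := ModuleCat.hom_ext (LinearMap.ext_ring (by simp))
        right_inv m := by simp }

def freeIsoSigmaConst : ModuleCat.free R ≅ sigmaConst.obj (ModuleCat.of R R) :=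
  (ModuleCat.adj R).leftAdjointUniq ((sigmaConstAdj _).ofNatIsoRight (coyonedaObjIsoForget R))

end ModuleCat

section SingularHomology

variable (k : Type) [Field k]

def singularHomologyIso (i : ℕ) :
    singularHomology k i ≅
      (AlgebraicTopology.singularHomologyFunctor (ModuleCat k) i).obj (ModuleCat.of k k) :=
  Functor.isoWhiskerRight (Functor.isoWhiskerLeft TopCat.toSSet
    (Functor.isoWhiskerRight
      ((SimplicialObject.whiskering _ _).mapIso (ModuleCat.freeIsoSigmaConst k)) _)) _

lemma isZero_singularHomology_zero_iff (X : TopCat.{0}) :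
    IsZero ((singularHomology k 0).obj X) ↔ IsEmpty X := by
  rw [Iso.isZero_iff ((singularHomologyIso k 0).app X ≪≫ TopCat.singularHomology₀Iso X _),
    isZero_sigma_const_iff (ModuleCat.not_isZero_of_nontrivial k _)]
  exact ⟨fun h => ⟨fun x => h.false (.mk x)⟩, fun h => ⟨ZerothHomotopy.rec h.false⟩⟩

lemma singularHomology_zero_map_ne_zero {Y Z : TopCat.{0}} (f : Y ⟶ Z) [Nonempty Y] :
    (singularHomology k 0).map f ≠ 0 := by
  intro hf
  let u : TopCat.of PUnit ⟶ Y := TopCat.ofHom (ContinuousMap.const _ (Classical.arbitrary Y))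
  let v : Z ⟶ TopCat.of PUnit := TopCat.ofHom (ContinuousMap.const _ PUnit.unit)
  have hfactor : u ≫ f ≫ v = 𝟙 _ := rfl
  have : IsZero ((singularHomology k 0).obj (TopCat.of PUnit)) := by
    rw [IsZero.iff_id_eq_zero, ← (singularHomology k 0).map_id, ← hfactor]
    simp [hf]
  exact not_isEmpty_of_nonempty PUnit ((isZero_singularHomology_zero_iff k _).1 this)

end SingularHomology

/-- **Remark (`H_0 ∘ F^S` is not essentially surjective).**
There is an `n`-module `M` not isomorphic to `H_0 ∘ F^S(X, γ)` for any topological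
space `X` and continuous `γ : X → ℝⁿ`. -/
theorem not_essSurj_persistentHomology_zero (k : Type) [Field k] (n : ℕ) (hn : 1 ≤ n) :
    ∃ M : NMod k n, ∀ (X : TopCat.{0}) (γ : C(X, Rn n)),
      ¬ Nonempty (persistentHomology k 0 X γ ≅ M) := by
  refine ⟨constWithZeroTransitions (Rn n) (ModuleCat.of k k), fun X γ ⟨e⟩ => ?_⟩
  let a : Rn n := fun _ => 0
  let b : Rn n := fun _ => 1
  have hab : a ≠ b := fun h => by simpa [a, b] using congrFun h ⟨0, hn⟩
  let f : a ⟶ b := homOfLE fun _ => zero_le_one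
  have : Nonempty ((sublevelFiltration X γ).obj a) := by
    rw [← not_isEmpty_iff, ← isZero_singularHomology_zero_iff k]
    exact fun h => ModuleCat.not_isZero_of_nontrivial k (.of k k) (h.of_iso (e.app a).symm)
  apply singularHomology_zero_map_ne_zero k ((sublevelFiltration X γ).map f)
  calc _ = e.hom.app a ≫ (constWithZeroTransitions (Rn n) (ModuleCat.of k k)).map f ≫
          e.inv.app b := (NatIso.naturality_1 e.symm f).symm
    _ = 0 := by rw [constWithZeroTransitions_map_of_ne _ f hab]; simp

end
end

section
/- (Algebraic realization of interleavings.) Let M and N be ε-interleaved n-modules. Then there exist n-graded sets W₁, W₂ and sets Y₁, Y₂ of homogeneous elements of the free n-module ⟨W₁ ∪ W₂⟩ such that every element of Y₁ lies in the submodule ⟨W₁, W₂(−ε)⟩, every element of Y₂ lies in the submodule ⟨W₁(−ε), W₂⟩, and M ≅ ⟨W₁, W₂(−ε) | Y₁, Y₂(−ε)⟩ while N ≅ ⟨W₁(−ε), W₂ | Y₁(−ε), Y₂⟩. -/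
/-!
Take every homogeneous element as a generator: `W₁ = ⊔ₐ M_a` and `W₂ = ⊔ₐ N_a`. Sending
`x ∈ W₁` to `x` and `y ∈ W₂(-ε)` to `g y` is a surjection `⟨W₁, W₂(-ε)⟩ → M`; symmetrically
`f` gives a surjection `⟨W₁(-ε), W₂⟩ → N`. Let `Y₁`, `Y₂` be their kernels. By naturality and
`g ∘ f = shift`, the first surjection precomposed with `⟨W₁(-ε), W₂⟩ → ⟨W₁, W₂(-ε)⟩(ε)` is
`g` after the second, so `Y₂(-ε)` adds nothing to the kernel `Y₁` and `M` is the quotient;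
likewise for `N`.
-/

open CategoryTheory

noncomputable section

/-- The free `n`-module on the `n`-graded set `(W, gr)`, i.e. `⊕_{w ∈ W} P_n(-gr w)`. -/
def grFree (k : Type) [Field k] (n : ℕ) (W : Type) (gr : W → Rn n) : NMod k n where
  obj a := ModuleCat.of k ({w : W // gr w ≤ a} →₀ k)
  map {a b} h := ModuleCat.ofHom (Finsupp.lmapDomain k k
    (fun w : {w // gr w ≤ a} => (⟨w.1, le_trans w.2 (leOfHom h)⟩ : {w // gr w ≤ b})))
  map_id := fun _ => ModuleCat.hom_ext (Finsupp.lmapDomain_id k k)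
  map_comp := fun {a b c} f g => by
    exact ModuleCat.hom_ext <| Finsupp.lmapDomain_comp k k
      (fun w : {w // gr w ≤ a} => (⟨w.1, le_trans w.2 (leOfHom f)⟩ : {w // gr w ≤ b}))
      (fun w : {w // gr w ≤ b} => (⟨w.1, le_trans w.2 (leOfHom g)⟩ : {w // gr w ≤ c}))


/-- The set of relations at grade `b` determined by a family of homogeneous elements
`v y` of grades `grY y` of the `n`-module `A`. -/
def relSet {k : Type} [Field k] {n : ℕ} (A : NMod k n) {Y : Type} (grY : Y → Rn n)
    (v : ∀ y : Y, A.obj (grY y)) (b : Rn n) : Set (A.obj b) :=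
  {x | ∃ (y : Y) (h : grY y ≤ b), x = A.map (homOfLE h) (v y)}

/-- The quotient of the `n`-module `A` by the submodule generated by the homogeneous
elements `v y`, `y : Y`. -/
def grQuot {k : Type} [Field k] {n : ℕ} (A : NMod k n) {Y : Type} (grY : Y → Rn n)
    (v : ∀ y : Y, A.obj (grY y)) : NMod k n where
  obj b := ModuleCat.of k ((A.obj b) ⧸ Submodule.span k (relSet A grY v b))
  map {a b} h := ModuleCat.ofHom <| Submodule.mapQ _ _ (A.map h).hom (by
    rw [Submodule.span_le]
    rintro x ⟨y, hy, rfl⟩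
    refine Submodule.subset_span ?_
    refine ⟨y, le_trans hy (leOfHom h), ?_⟩
    have h2 : (homOfLE (le_trans hy (leOfHom h))) = homOfLE hy ≫ h := rfl
    rw [h2, A.map_comp]
    rfl)
  map_id := by
    intro a
    ext1
    refine Submodule.linearMap_qext _ ?_
    ext x
    simp only [LinearMap.comp_apply, Submodule.mkQ_apply, Submodule.mapQ_apply,
      CategoryTheory.Functor.map_id]
    rfl
  map_comp := by
    intro a b c f g
    ext1
    refine Submodule.linearMap_qext _ ?_
    ext x
    simp only [LinearMap.comp_apply, Submodule.mkQ_apply, Submodule.mapQ_apply,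
      CategoryTheory.Functor.map_comp, CategoryTheory.comp_apply]
    rfl

/-- Grades on `W₁ ⊕ W₂`, where the grades of `W₁` are raised by `δ₁` and the grades of
`W₂` are raised by `δ₂`; e.g. `sumGr gr₁ gr₂ 0 ε` is the graded set `W₁ ∪ W₂(-ε)`. -/
def sumGr {n : ℕ} {W₁ W₂ : Type} (gr₁ : W₁ → Rn n) (gr₂ : W₂ → Rn n) (δ₁ δ₂ : ℝ) :
    W₁ ⊕ W₂ → Rn n :=
  Sum.elim (fun w => vshift δ₁ (gr₁ w)) (fun w => vshift δ₂ (gr₂ w))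

lemma sumGr_swap_le₁ {n : ℕ} {W₁ W₂ : Type} {gr₁ : W₁ → Rn n} {gr₂ : W₂ → Rn n} {ε : ℝ}
    (hε : 0 ≤ ε) (w : W₁ ⊕ W₂) (g : Rn n) (h : sumGr gr₁ gr₂ ε 0 w ≤ g) :
    sumGr gr₁ gr₂ 0 ε w ≤ vshift ε g := by
  cases w with
  | inl w =>
      refine (Rn.le_def _ _).2 fun j => ?_
      have := (Rn.le_def _ _).1 h j
      simp only [sumGr, Sum.elim_inl, vshift] at this ⊢
      linarith
  | inr w =>
      refine (Rn.le_def _ _).2 fun j => ?_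
      have := (Rn.le_def _ _).1 h j
      simp only [sumGr, Sum.elim_inr, vshift] at this ⊢
      linarith

lemma sumGr_swap_le₂ {n : ℕ} {W₁ W₂ : Type} {gr₁ : W₁ → Rn n} {gr₂ : W₂ → Rn n} {ε : ℝ}
    (hε : 0 ≤ ε) (w : W₁ ⊕ W₂) (g : Rn n) (h : sumGr gr₁ gr₂ 0 ε w ≤ g) :
    sumGr gr₁ gr₂ ε 0 w ≤ vshift ε g := by
  cases w with
  | inl w =>
      refine (Rn.le_def _ _).2 fun j => ?_
      have := (Rn.le_def _ _).1 h j
      simp only [sumGr, Sum.elim_inl, vshift] at this ⊢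
      linarith
  | inr w =>
      refine (Rn.le_def _ _).2 fun j => ?_
      have := (Rn.le_def _ _).1 h j
      simp only [sumGr, Sum.elim_inr, vshift] at this ⊢
      linarith

/-- The canonical inclusion sending a homogeneous element of `⟨W₁(-ε), W₂⟩` of grade `g`
to a homogeneous element of `⟨W₁, W₂(-ε)⟩` of grade `g + ε⃗`. -/
def shiftEmbed₁ {k : Type} [Field k] {n : ℕ} {W₁ W₂ : Type} (gr₁ : W₁ → Rn n)
    (gr₂ : W₂ → Rn n) {ε : ℝ} (hε : 0 ≤ ε) (g : Rn n) :
    (grFree k n (W₁ ⊕ W₂) (sumGr gr₁ gr₂ ε 0)).obj g ⟶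
      (grFree k n (W₁ ⊕ W₂) (sumGr gr₁ gr₂ 0 ε)).obj (vshift ε g) :=
  ModuleCat.ofHom (Finsupp.lmapDomain k k (fun w : {w // sumGr gr₁ gr₂ ε 0 w ≤ g} =>
    (⟨w.1, sumGr_swap_le₁ hε w.1 g w.2⟩ : {w // sumGr gr₁ gr₂ 0 ε w ≤ vshift ε g})))

/-- The canonical inclusion sending a homogeneous element of `⟨W₁, W₂(-ε)⟩` of grade `g`
to a homogeneous element of `⟨W₁(-ε), W₂⟩` of grade `g + ε⃗`. -/
def shiftEmbed₂ {k : Type} [Field k] {n : ℕ} {W₁ W₂ : Type} (gr₁ : W₁ → Rn n)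
    (gr₂ : W₂ → Rn n) {ε : ℝ} (hε : 0 ≤ ε) (g : Rn n) :
    (grFree k n (W₁ ⊕ W₂) (sumGr gr₁ gr₂ 0 ε)).obj g ⟶
      (grFree k n (W₁ ⊕ W₂) (sumGr gr₁ gr₂ ε 0)).obj (vshift ε g) :=
  ModuleCat.ofHom (Finsupp.lmapDomain k k (fun w : {w // sumGr gr₁ gr₂ 0 ε w ≤ g} =>
    (⟨w.1, sumGr_swap_le₂ hε w.1 g w.2⟩ : {w // sumGr gr₁ gr₂ ε 0 w ≤ vshift ε g})))

variable {k : Type} [Field k] {n : ℕ}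

lemma vshift_zero (a : Rn n) : vshift 0 a = a :=
  funext fun j => add_zero (a j)

lemma map_homOfLE_map_homOfLE (A : NMod k n) {a b c : Rn n} (hab : a ≤ b) (hbc : b ≤ c)
    (x : A.obj a) :
    A.map (homOfLE hbc) (A.map (homOfLE hab) x) = A.map (homOfLE (hab.trans hbc)) x := by
  rw [← ConcreteCategory.comp_apply, ← A.map_comp, homOfLE_comp]

lemma map_homOfLE_refl (A : NMod k n) {a : Rn n} (x : A.obj a) :
    A.map (homOfLE le_rfl) x = x := by
  change A.map (𝟙 a) x = x
  rw [A.map_id]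
  rfl

def grFreeLift (A : NMod k n) {W : Type} (gr : W → Rn n) (u : ∀ w, A.obj (gr w)) :
    grFree k n W gr ⟶ A where
  app b := ModuleCat.ofHom
    (Finsupp.linearCombination k fun w : {w // gr w ≤ b} => A.map (homOfLE w.2) (u w.1))
  naturality a b h := by
    refine ModuleCat.hom_ext (Finsupp.lhom_ext fun w c => ?_)
    change Finsupp.linearCombination k _ (Finsupp.mapDomain _ (Finsupp.single w c)) =
      A.map h (Finsupp.linearCombination k _ (Finsupp.single w c))
    rw [Finsupp.mapDomain_single, Finsupp.linearCombination_single,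
      Finsupp.linearCombination_single, map_smul]
    exact congrArg (c • ·) (map_homOfLE_map_homOfLE A w.2 (leOfHom h) (u w.1)).symm

lemma grFreeLift_app_single (A : NMod k n) {W : Type} {gr : W → Rn n} (u : ∀ w, A.obj (gr w))
    {b : Rn n} (w : {w // gr w ≤ b}) (c : k) :
    (grFreeLift A gr u).app b (Finsupp.single w c) = c • A.map (homOfLE w.2) (u w.1) :=
  Finsupp.linearCombination_single k c w

lemma grFreeLift_app_surjective (A : NMod k n) {W : Type} {gr : W → Rn n}
    (u : ∀ w, A.obj (gr w))
    (hu : ∀ b (x : A.obj b), ∃ w, ∃ hw : gr w ≤ b, A.map (homOfLE hw) (u w) = x) (b : Rn n) :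
    Function.Surjective ((grFreeLift A gr u).app b) := by
  intro x
  obtain ⟨w, hw, rfl⟩ := hu b x
  exact ⟨Finsupp.single ⟨w, hw⟩ 1, by rw [grFreeLift_app_single, one_smul]⟩

def grFreeShift {W : Type} {gr gr' : W → Rn n} {ε : ℝ}
    (hgr : ∀ w b, gr' w ≤ b → gr w ≤ vshift ε b) (b : Rn n) :
    (grFree k n W gr').obj b ⟶ (grFree k n W gr).obj (vshift ε b) :=
  ModuleCat.ofHom (Finsupp.lmapDomain k k fun w => ⟨w.1, hgr w.1 b w.2⟩)

lemma grFreeLift_app_grFreeShift {A B : NMod k n} {W : Type} {gr gr' : W → Rn n} {ε : ℝ}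
    (hgr : ∀ w b, gr' w ≤ b → gr w ≤ vshift ε b) (u : ∀ w, A.obj (gr w))
    (u' : ∀ w, B.obj (gr' w)) (g : ∀ a, B.obj a ⟶ A.obj (vshift ε a))
    (hg : ∀ (a b : Rn n) (h : a ≤ b),
      B.map (homOfLE h) ≫ g b = g a ≫ A.map (homOfLE (vshift_mono ε h)))
    (hu : ∀ w, g (gr' w) (u' w) = A.map (homOfLE (hgr w _ le_rfl)) (u w))
    (b : Rn n) (x : (grFree k n W gr').obj b) :
    (grFreeLift A gr u).app (vshift ε b) (grFreeShift hgr b x) =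
      g b ((grFreeLift B gr' u').app b x) := by
  suffices grFreeShift hgr b ≫ (grFreeLift A gr u).app (vshift ε b) =
      (grFreeLift B gr' u').app b ≫ g b from ConcreteCategory.congr_hom this x
  refine ModuleCat.hom_ext (Finsupp.lhom_ext fun w c => ?_)
  change (grFreeLift A gr u).app _ (Finsupp.mapDomain _ (Finsupp.single w c)) =
    g b ((grFreeLift B gr' u').app b (Finsupp.single w c))
  rw [Finsupp.mapDomain_single, grFreeLift_app_single, grFreeLift_app_single, map_smul,
    ← ConcreteCategory.comp_apply, hg, ConcreteCategory.comp_apply, hu,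
    map_homOfLE_map_homOfLE]

lemma nonempty_iso_grQuot_of_surjective {F A : NMod k n} (φ : F ⟶ A)
    (hφ : ∀ b, Function.Surjective (φ.app b)) {Y : Type} {grY : Y → Rn n}
    {v : ∀ y, F.obj (grY y)} (hv : ∀ y, φ.app (grY y) (v y) = 0)
    (hker : ∀ b, LinearMap.ker (φ.app b).hom ≤ Submodule.span k (relSet F grY v b)) :
    Nonempty (A ≅ grQuot F grY v) := by
  have hspan : ∀ b, Submodule.span k (relSet F grY v b) = LinearMap.ker (φ.app b).hom := by
    refine fun b => le_antisymm (Submodule.span_le.2 ?_) (hker b)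
    rintro _ ⟨y, hy, rfl⟩
    change φ.app b (F.map _ (v y)) = 0
    rw [NatTrans.naturality_apply, hv, map_zero]
  refine ⟨(NatIso.ofComponents (fun b => ((Submodule.quotEquivOfEq _ _ (hspan b)).trans
    ((φ.app b).hom.quotKerEquivOfSurjective (hφ b))).toModuleIso) fun {a b} h => ?_).symm⟩
  refine ModuleCat.hom_ext (Submodule.linearMap_qext _ (LinearMap.ext fun x => ?_))
  exact NatTrans.naturality_apply φ h x

section Interleaving

variable {M N : NMod k n} {ε : ℝ}

-- `vshift 0 a` is only propositionally equal to `a`, hence the transport along `M.map`.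
def interleavingGen₁ (g : ∀ a, N.obj a ⟶ M.obj (vshift ε a)) :
    ∀ w : (Σ a, M.obj a) ⊕ (Σ a, N.obj a), M.obj (sumGr Sigma.fst Sigma.fst 0 ε w)
  | .inl w => M.map (homOfLE (vshift_zero w.1).ge) w.2
  | .inr w => g w.1 w.2

def interleavingGen₂ (f : ∀ a, M.obj a ⟶ N.obj (vshift ε a)) :
    ∀ w : (Σ a, M.obj a) ⊕ (Σ a, N.obj a), N.obj (sumGr Sigma.fst Sigma.fst ε 0 w)
  | .inl w => f w.1 w.2
  | .inr w => N.map (homOfLE (vshift_zero w.1).ge) w.2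

lemma exists_map_interleavingGen₁_eq (g : ∀ a, N.obj a ⟶ M.obj (vshift ε a)) (b : Rn n)
    (x : M.obj b) :
    ∃ w, ∃ hw : sumGr Sigma.fst Sigma.fst 0 ε w ≤ b,
      M.map (homOfLE hw) (interleavingGen₁ g w) = x :=
  ⟨.inl ⟨b, x⟩, (vshift_zero b).le,
    (map_homOfLE_map_homOfLE M _ _ x).trans (map_homOfLE_refl M x)⟩

lemma exists_map_interleavingGen₂_eq (f : ∀ a, M.obj a ⟶ N.obj (vshift ε a)) (b : Rn n)
    (y : N.obj b) :
    ∃ w, ∃ hw : sumGr Sigma.fst Sigma.fst ε 0 w ≤ b,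
      N.map (homOfLE hw) (interleavingGen₂ f w) = y :=
  ⟨.inr ⟨b, y⟩, (vshift_zero b).le,
    (map_homOfLE_map_homOfLE N _ _ y).trans (map_homOfLE_refl N y)⟩

lemma app_interleavingGen₂ (hε : 0 ≤ ε) {f : ∀ a, M.obj a ⟶ N.obj (vshift ε a)}
    {g : ∀ a, N.obj a ⟶ M.obj (vshift ε a)}
    (hg : ∀ (a b : Rn n) (h : a ≤ b),
      N.map (homOfLE h) ≫ g b = g a ≫ M.map (homOfLE (vshift_mono ε h)))
    (hgf : ∀ a : Rn n, f a ≫ g (vshift ε a) = M.map (homOfLE (le_vshift₂ hε a)))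
    (w : (Σ a, M.obj a) ⊕ (Σ a, N.obj a)) :
    g _ (interleavingGen₂ f w) =
      M.map (homOfLE (sumGr_swap_le₁ hε w _ le_rfl)) (interleavingGen₁ g w) := by
  rcases w with ⟨a, x⟩ | ⟨a, y⟩
  · exact (ConcreteCategory.congr_hom (hgf a) x).trans (map_homOfLE_map_homOfLE M _ _ x).symm
  · exact ConcreteCategory.congr_hom (hg _ _ _) y

lemma app_interleavingGen₁ (hε : 0 ≤ ε) {f : ∀ a, M.obj a ⟶ N.obj (vshift ε a)}
    {g : ∀ a, N.obj a ⟶ M.obj (vshift ε a)}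
    (hf : ∀ (a b : Rn n) (h : a ≤ b),
      M.map (homOfLE h) ≫ f b = f a ≫ N.map (homOfLE (vshift_mono ε h)))
    (hfg : ∀ a : Rn n, g a ≫ f (vshift ε a) = N.map (homOfLE (le_vshift₂ hε a)))
    (w : (Σ a, M.obj a) ⊕ (Σ a, N.obj a)) :
    f _ (interleavingGen₁ g w) =
      N.map (homOfLE (sumGr_swap_le₂ hε w _ le_rfl)) (interleavingGen₂ f w) := by
  rcases w with ⟨a, x⟩ | ⟨a, y⟩
  · exact ConcreteCategory.congr_hom (hf _ _ _) x
  · exact (ConcreteCategory.congr_hom (hfg a) y).trans (map_homOfLE_map_homOfLE N _ _ y).symm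

end Interleaving

theorem algebraic_realization_of_interleaving_general (k : Type) [Field k] (n : ℕ)
    (ε : ℝ) (hε : 0 ≤ ε) (M N : NMod k n) (h : Interleaved ε M N) :
    ∃ (W₁ W₂ : Type) (gr₁ : W₁ → Rn n) (gr₂ : W₂ → Rn n)
      (Y₁ Y₂ : Type) (grY₁ : Y₁ → Rn n) (grY₂ : Y₂ → Rn n)
      (v₁ : ∀ y : Y₁, (grFree k n (W₁ ⊕ W₂) (sumGr gr₁ gr₂ 0 ε)).obj (grY₁ y))
      (v₂ : ∀ y : Y₂, (grFree k n (W₁ ⊕ W₂) (sumGr gr₁ gr₂ ε 0)).obj (grY₂ y)),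
      Nonempty (M ≅ grQuot (grFree k n (W₁ ⊕ W₂) (sumGr gr₁ gr₂ 0 ε))
          (Sum.elim grY₁ fun y => vshift ε (grY₂ y))
          (fun y => Sum.rec (motive := fun y => ((grFree k n (W₁ ⊕ W₂)
                (sumGr gr₁ gr₂ 0 ε)).obj ((Sum.elim grY₁ fun y => vshift ε (grY₂ y)) y)))
            (fun y₁ => v₁ y₁) (fun y₂ => shiftEmbed₁ gr₁ gr₂ hε (grY₂ y₂) (v₂ y₂)) y)) ∧
      Nonempty (N ≅ grQuot (grFree k n (W₁ ⊕ W₂) (sumGr gr₁ gr₂ ε 0))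
          (Sum.elim (fun y => vshift ε (grY₁ y)) grY₂)
          (fun y => Sum.rec (motive := fun y => ((grFree k n (W₁ ⊕ W₂)
                (sumGr gr₁ gr₂ ε 0)).obj ((Sum.elim (fun y => vshift ε (grY₁ y)) grY₂) y)))
            (fun y₁ => shiftEmbed₂ gr₁ gr₂ hε (grY₁ y₁) (v₁ y₁)) (fun y₂ => v₂ y₂) y)) := by
  obtain ⟨_, f, g, hf, hg, hgf, hfg⟩ := h
  set φM := grFreeLift M _ (interleavingGen₁ g)
  set φN := grFreeLift N _ (interleavingGen₂ f)
  refine ⟨Σ a, M.obj a, Σ a, N.obj a, Sigma.fst, Sigma.fst,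
    Σ b, LinearMap.ker (φM.app b).hom, Σ b, LinearMap.ker (φN.app b).hom, Sigma.fst, Sigma.fst,
    fun y => y.2.1, fun y => y.2.1, ?_, ?_⟩
  · refine nonempty_iso_grQuot_of_surjective φM
      (grFreeLift_app_surjective _ _ (exists_map_interleavingGen₁_eq g)) ?_
      fun b x hx => Submodule.subset_span ⟨.inl ⟨b, x, hx⟩, le_rfl, (map_homOfLE_refl _ x).symm⟩
    rintro (y | y)
    · exact y.2.2
    · exact (grFreeLift_app_grFreeShift (sumGr_swap_le₁ hε) _ _ g hg
        (app_interleavingGen₂ hε hg hgf) _ _).trans ((congrArg _ y.2.2).trans (map_zero _))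
  · refine nonempty_iso_grQuot_of_surjective φN
      (grFreeLift_app_surjective _ _ (exists_map_interleavingGen₂_eq f)) ?_
      fun b x hx => Submodule.subset_span ⟨.inr ⟨b, x, hx⟩, le_rfl, (map_homOfLE_refl _ x).symm⟩
    rintro (y | y)
    · exact (grFreeLift_app_grFreeShift (sumGr_swap_le₂ hε) _ _ f hf
        (app_interleavingGen₁ hε hf hfg) _ _).trans ((congrArg _ y.2.2).trans (map_zero _))
    · exact y.2.2

/-- **Corollary (algebraic realization of interleavings).**
If `M` and `N` are `ε`-interleaved `n`-modules, then there are `n`-graded sets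
`W₁, W₂` and families `Y₁, Y₂` of homogeneous elements, with the elements of `Y₁`
homogeneous elements of `⟨W₁, W₂(-ε)⟩` and the elements of `Y₂` homogeneous elements of
`⟨W₁(-ε), W₂⟩`, such that `M ≅ ⟨W₁, W₂(-ε) | Y₁, Y₂(-ε)⟩` and
`N ≅ ⟨W₁(-ε), W₂ | Y₁(-ε), Y₂⟩`. -/
theorem algebraic_realization_of_interleaving (k : Type) [Field k] (n : ℕ) (hn : 1 ≤ n)
    (ε : ℝ) (hε : 0 ≤ ε) (M N : NMod k n) (h : Interleaved ε M N) :
    ∃ (W₁ W₂ : Type) (gr₁ : W₁ → Rn n) (gr₂ : W₂ → Rn n)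
      (Y₁ Y₂ : Type) (grY₁ : Y₁ → Rn n) (grY₂ : Y₂ → Rn n)
      (v₁ : ∀ y : Y₁, (grFree k n (W₁ ⊕ W₂) (sumGr gr₁ gr₂ 0 ε)).obj (grY₁ y))
      (v₂ : ∀ y : Y₂, (grFree k n (W₁ ⊕ W₂) (sumGr gr₁ gr₂ ε 0)).obj (grY₂ y)),
      Nonempty (M ≅ grQuot (grFree k n (W₁ ⊕ W₂) (sumGr gr₁ gr₂ 0 ε))
          (Sum.elim grY₁ fun y => vshift ε (grY₂ y))
          (fun y => Sum.rec (motive := fun y => ((grFree k n (W₁ ⊕ W₂)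
                (sumGr gr₁ gr₂ 0 ε)).obj ((Sum.elim grY₁ fun y => vshift ε (grY₂ y)) y)))
            (fun y₁ => v₁ y₁) (fun y₂ => shiftEmbed₁ gr₁ gr₂ hε (grY₂ y₂) (v₂ y₂)) y)) ∧
      Nonempty (N ≅ grQuot (grFree k n (W₁ ⊕ W₂) (sumGr gr₁ gr₂ ε 0))
          (Sum.elim (fun y => vshift ε (grY₁ y)) grY₂)
          (fun y => Sum.rec (motive := fun y => ((grFree k n (W₁ ⊕ W₂)
                (sumGr gr₁ gr₂ ε 0)).obj ((Sum.elim (fun y => vshift ε (grY₁ y)) grY₂) y)))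
            (fun y₁ => shiftEmbed₂ gr₁ gr₂ hε (grY₁ y₁) (v₁ y₁)) (fun y₂ => v₂ y₂) y)) :=
  algebraic_realization_of_interleaving_general k n ε hε M N h

end
end

section
/- (Stability of the interleaving distance.) Let k be any field, i ≥ 0, X a topological space, and γ₁, γ₂ : X → ℝⁿ continuous functions. Then the n-modules H_i∘F^S(X,γ₁) and H_i∘F^S(X,γ₂) are ε-interleaved for ε = sup_x ‖γ₁(x)−γ₂(x)‖_∞; consequently d_I(H_i∘F^S(X,γ₁), H_i∘F^S(X,γ₂)) ≤ sup_x ‖γ₁(x)−γ₂(x)‖_∞. -/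
open CategoryTheory

noncomputable section

/-!
If `γ₁` and `γ₂` differ by at most `ε` in the sup norm, then `{γ₁ ≤ a} ⊆ {γ₂ ≤ a + ε⃗}` and
`{γ₂ ≤ a} ⊆ {γ₁ ≤ a + ε⃗}`. All these maps, like the structure maps of the two filtrations, are
inclusions of subspaces of `X`, so every square and triangle of an `ε`-interleaving already
commutes at the level of spaces; applying the functor `H_i` yields the interleaving of homology.
-/

lemma le_vshift_of_dist_le {n : ℕ} {ε : ℝ} {u v a : Rn n} (huv : dist u v ≤ ε) (hu : u ≤ a) :
    v ≤ vshift ε a := fun j => by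
  have hj : |u j - v j| ≤ ε := (dist_le_pi_dist u v j).trans huv
  simp only [vshift]
  linarith [hu j, (abs_le.1 hj).1]

lemma dI_le_of_interleaved {k : Type} [Field k] {n : ℕ} {M N : NMod k n} {ε : ℝ}
    (h : Interleaved ε M N) : dI M N ≤ ENNReal.ofReal ε :=
  iInf₂_le ε h

lemma interleaved_comp {C : Type*} [Category C] {k : Type} [Field k] {n : ℕ} {ε : ℝ}
    (hε : 0 ≤ ε) {F G : Rn n ⥤ C} (H : C ⥤ ModuleCat.{0} k)
    (f : ∀ a, F.obj a ⟶ G.obj (vshift ε a)) (g : ∀ a, G.obj a ⟶ F.obj (vshift ε a))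
    (hf : ∀ (a b : Rn n) (h : a ≤ b),
      F.map (homOfLE h) ≫ f b = f a ≫ G.map (homOfLE (vshift_mono ε h)))
    (hg : ∀ (a b : Rn n) (h : a ≤ b),
      G.map (homOfLE h) ≫ g b = g a ≫ F.map (homOfLE (vshift_mono ε h)))
    (hfg : ∀ a, f a ≫ g (vshift ε a) = F.map (homOfLE (le_vshift₂ hε a)))
    (hgf : ∀ a, g a ≫ f (vshift ε a) = G.map (homOfLE (le_vshift₂ hε a))) :
    Interleaved ε (F ⋙ H) (G ⋙ H) := by
  refine ⟨hε, fun a => H.map (f a), fun a => H.map (g a), ?_, ?_, ?_, ?_⟩ <;>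
    intros <;> simp only [Functor.comp_map, ← H.map_comp, hf, hg, hfg, hgf]

def sublevelShift {n : ℕ} {X : TopCat.{0}} {γ γ' : C(X, Rn n)} {ε : ℝ}
    (hγ : ∀ x, dist (γ x) (γ' x) ≤ ε) (a : Rn n) :
    (sublevelFiltration X γ).obj a ⟶ (sublevelFiltration X γ').obj (vshift ε a) :=
  TopCat.ofHom ⟨fun x => ⟨x.1, le_vshift_of_dist_le (hγ x.1) x.2⟩,
    continuous_subtype_val.subtype_mk _⟩

lemma persistentHomology_interleaved_of_dist_le (k : Type) [Field k] {n : ℕ} (i : ℕ)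
    (X : TopCat.{0}) {γ₁ γ₂ : C(X, Rn n)} {ε : ℝ} (hε : 0 ≤ ε)
    (hγ : ∀ x, dist (γ₁ x) (γ₂ x) ≤ ε) :
    Interleaved ε (persistentHomology k i X γ₁) (persistentHomology k i X γ₂) :=
  interleaved_comp hε (singularHomology k i) (sublevelShift hγ)
    (sublevelShift fun x => (dist_comm _ _).trans_le (hγ x))
    (fun _ _ _ => rfl) (fun _ _ _ => rfl) (fun _ => rfl) (fun _ => rfl)

theorem persistentHomology_stability_general (k : Type) [Field k] (n : ℕ) (i : ℕ)
    (X : TopCat.{0}) (γ₁ γ₂ : C(X, Rn n)) :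
    (∀ ε : ℝ, 0 ≤ ε → (⨆ x : X, edist (γ₁ x) (γ₂ x)) = ENNReal.ofReal ε →
      Interleaved ε (persistentHomology k i X γ₁) (persistentHomology k i X γ₂)) ∧
    dI (persistentHomology k i X γ₁) (persistentHomology k i X γ₂) ≤
      ⨆ x : X, edist (γ₁ x) (γ₂ x) := by
  have interleaved : ∀ ε : ℝ, 0 ≤ ε → (⨆ x : X, edist (γ₁ x) (γ₂ x)) = ENNReal.ofReal ε →
      Interleaved ε (persistentHomology k i X γ₁) (persistentHomology k i X γ₂) :=
    fun ε hε hsup => persistentHomology_interleaved_of_dist_le k i X hε fun x =>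
      (edist_le_ofReal hε).1 (hsup ▸ le_iSup (fun x => edist (γ₁ x) (γ₂ x)) x)
  refine ⟨interleaved, ?_⟩
  set S := ⨆ x : X, edist (γ₁ x) (γ₂ x)
  rcases eq_or_ne S ⊤ with hS | hS
  · exact hS ▸ le_top
  · calc dI (persistentHomology k i X γ₁) (persistentHomology k i X γ₂)
        ≤ ENNReal.ofReal S.toReal :=
          dI_le_of_interleaved <|
            interleaved _ ENNReal.toReal_nonneg (ENNReal.ofReal_toReal hS).symm
      _ = S := ENNReal.ofReal_toReal hS

/-- **Theorem (stability of the interleaving distance).**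
For any field `k`, `i ≥ 0`, a topological space `X` and continuous `γ₁, γ₂ : X → ℝⁿ`,
the modules `H_i ∘ F^S(X, γ₁)` and `H_i ∘ F^S(X, γ₂)` are `ε`-interleaved for
`ε = sup_x ‖γ₁ x - γ₂ x‖_∞`; consequently
`d_I(H_i ∘ F^S(X, γ₁), H_i ∘ F^S(X, γ₂)) ≤ sup_x ‖γ₁ x - γ₂ x‖_∞`. -/
theorem persistentHomology_stability (k : Type) [Field k] (n : ℕ) (hn : 1 ≤ n) (i : ℕ)
    (X : TopCat.{0}) (γ₁ γ₂ : C(X, Rn n)) :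
    (∀ ε : ℝ, 0 ≤ ε → (⨆ x : X, edist (γ₁ x) (γ₂ x)) = ENNReal.ofReal ε →
      Interleaved ε (persistentHomology k i X γ₁) (persistentHomology k i X γ₂)) ∧
    dI (persistentHomology k i X γ₁) (persistentHomology k i X γ₂) ≤
      ⨆ x : X, edist (γ₁ x) (γ₂ x) :=
  persistentHomology_stability_general k n i X γ₁ γ₂

end
end
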